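/- arXiv:1306.2185 — 2 statements merged into one kernel-verified Lean document; each statement's English description precedes it below -/
import Mathlib

section
/- Let v_1,…,v_n ∈ V be pairwise orthogonal vectors and K ⊆ {1,…,n} a subset with Q(v_i) ≠ 0 for all i ∈ K, so that the basis blade e_K is invertible; write κ = |K|. Let A = Σ_J a_J e_J be an arbitrary real linear combination of basis blades, J ranging over all subsets of {1,…,n} with |J| = ι_J. Then the commutative and anticommutative parts of A with respect to e_K select exactly the basis blades of the corresponding commutation parity: A_{c⁰(e_K)} = Σ_{J : ι_J·κ − |J∩K| even} a_J e_J and A_{c¹(e_K)} = Σ_{J : ι_J·κ − |J∩K| odd} a_J e_J. -/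
noncomputable section
open CliffordAlgebra

variable {V : Type*} [AddCommGroup V] [Module ℝ V] (Q : QuadraticForm ℝ V)

/-- The basis blade `e_J`: the product `∏_{i ∈ J} ι(v i)` with factors taken in
increasing order of the index, `e_∅ = 1`. -/
def basisBlade {n : ℕ} (v : Fin n → V) (J : Finset (Fin n)) : CliffordAlgebra Q :=
  ((J.sort (· ≤ ·)).map (fun i => ι Q (v i))).prod

/-- The commutative (`s = 0`) and anticommutative (`s = 1`) part of `A` with respect to an
invertible element `B`: `A_{c^s(B)} = ½(A + (−1)^s B⁻¹AB)`. -/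
def cPart {𝔸 : Type*} [Ring 𝔸] [Algebra ℝ 𝔸] (B : 𝔸) (s : Fin 2) (A : 𝔸) : 𝔸 :=
  (2 : ℝ)⁻¹ • (A + (-1 : 𝔸) ^ (s : ℕ) * (Ring.inverse B * A * B))

/-! Orthogonality makes the generators `ι (v i)` pairwise anticommute, so moving `e_J` past `e_K`
costs one sign for each pair `(i, j) ∈ K × J` with `i ≠ j`; there are `|J||K| - |J ∩ K|` of them, so
`e_K⁻¹ e_J e_K = (-1)^(|J||K| - |J ∩ K|) e_J`. Every blade is thus an eigenvector of conjugation by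
`e_K` with eigenvalue `±1`, and `A ↦ ½(A ± e_K⁻¹ A e_K)` keeps exactly the blades of one sign. -/

section SortedCount

open Finset

variable {ι : Type*}

theorem Finset.countP_sort_ne [LinearOrder ι] (J : Finset ι) (i : ι) :
    (J.sort (· ≤ ·)).countP (· ≠ i) = #(J.erase i) := by
  rw [← Multiset.coe_countP, sort_eq, Multiset.countP_eq_card_filter, ← filter_ne', card_def,
    filter_val]

theorem Finset.sum_map_sort {M : Type*} [AddCommMonoid M] [LinearOrder ι] (K : Finset ι)
    (f : ι → M) : ((K.sort (· ≤ ·)).map f).sum = ∑ i ∈ K, f i := by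
  rw [sum_eq_multiset_sum, ← sort_eq K (· ≤ ·), Multiset.map_coe, Multiset.sum_coe]

theorem Finset.sum_card_erase_add_card_inter [DecidableEq ι] (J K : Finset ι) :
    ∑ i ∈ K, #(J.erase i) + #(J ∩ K) = #J * #K := by
  rw [inter_comm, ← filter_mem_eq_inter, card_filter, ← sum_add_distrib, mul_comm,
    ← smul_eq_mul, ← sum_const]
  refine sum_congr rfl fun i _ => ?_
  split_ifs with hi
  · exact card_erase_add_one hi
  · rw [erase_eq_of_notMem hi, add_zero]

end SortedCount

section Anticommuting

open Finset

variable {R ι : Type*} [Ring R] {x : ι → R}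

theorem List.prod_map_mul_of_anticomm [DecidableEq ι]
    (hx : _root_.Pairwise fun i j => x i * x j = -(x j * x i)) (l : List ι) (i : ι) :
    (l.map x).prod * x i = (-1) ^ l.countP (· ≠ i) * (x i * (l.map x).prod) := by
  induction l with
  | nil => simp
  | cons j l ih =>
    rw [List.map_cons, List.prod_cons, mul_assoc, ih,
      ((Commute.neg_one_right _).pow_right _).left_comm]
    by_cases hji : j = i
    · subst hji
      rw [List.countP_cons_of_neg (by simp)]
    · rw [List.countP_cons_of_pos (by simpa using hji), ← mul_assoc (x j), hx hji]
      noncomm_ring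

theorem List.prod_map_mul_prod_map_of_anticomm [DecidableEq ι]
    (hx : _root_.Pairwise fun i j => x i * x j = -(x j * x i)) (l₁ l₂ : List ι) :
    (l₁.map x).prod * (l₂.map x).prod =
      (-1) ^ (l₂.map fun i => l₁.countP (· ≠ i)).sum * ((l₂.map x).prod * (l₁.map x).prod) := by
  induction l₂ with
  | nil => simp
  | cons i l₂ ih =>
    simp only [List.map_cons, List.prod_cons, List.sum_cons]
    rw [← mul_assoc, List.prod_map_mul_of_anticomm hx, mul_assoc, mul_assoc, ih,
      ((Commute.neg_one_right _).pow_right _).left_comm, pow_add]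
    noncomm_ring

theorem Finset.sort_prod_mul_sort_prod_of_anticomm [LinearOrder ι]
    (hx : Pairwise fun i j => x i * x j = -(x j * x i)) (J K : Finset ι) :
    ((J.sort (· ≤ ·)).map x).prod * ((K.sort (· ≤ ·)).map x).prod =
      (-1) ^ (#J * #K - #(J ∩ K)) *
        (((K.sort (· ≤ ·)).map x).prod * ((J.sort (· ≤ ·)).map x).prod) := by
  have hexp : ((K.sort (· ≤ ·)).map fun i => (J.sort (· ≤ ·)).countP (· ≠ i)).sum =
      #J * #K - #(J ∩ K) := by
    simp only [countP_sort_ne, sum_map_sort]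
    have := sum_card_erase_add_card_inter J K
    omega
  rw [List.prod_map_mul_prod_map_of_anticomm hx, hexp]

end Anticommuting

section CPart

variable {𝔸 : Type*} [Ring 𝔸] [Algebra ℝ 𝔸] (B : 𝔸) (s : Fin 2)

theorem cPart_smul (c : ℝ) (A : 𝔸) : cPart B s (c • A) = c • cPart B s A := by
  simp only [cPart, mul_smul_comm, smul_mul_assoc, ← smul_add, smul_comm c]

theorem cPart_sum {ι : Type*} (t : Finset ι) (f : ι → 𝔸) :
    cPart B s (∑ i ∈ t, f i) = ∑ i ∈ t, cPart B s (f i) := by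
  simp only [cPart, Finset.mul_sum, Finset.sum_mul, ← Finset.sum_add_distrib, Finset.smul_sum]

theorem cPart_eq_ite_of_inverse_mul_mul_eq {A : 𝔸} {m : ℕ}
    (h : Ring.inverse B * A * B = (-1) ^ m * A) :
    cPart B s A = if m % 2 = s then A else 0 := by
  rw [cPart, h, ← mul_assoc, ← pow_add, neg_one_pow_eq_pow_mod_two]
  split_ifs with hm
  · rw [show ((s : ℕ) + m) % 2 = 0 by omega, pow_zero, one_mul, ← two_smul ℝ A, smul_smul,
      inv_mul_cancel₀ two_ne_zero, one_smul]
  · rw [show ((s : ℕ) + m) % 2 = 1 by omega, pow_one, neg_one_mul, add_neg_cancel, smul_zero]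

end CPart

section BasisBlade

open Finset

variable {n : ℕ} {v : Fin n → V}

theorem pairwise_ι_anticomm_of_polar_eq_zero
    (hv : ∀ i j : Fin n, i ≠ j → QuadraticMap.polar Q (v i) (v j) = 0) :
    Pairwise fun i j => ι Q (v i) * ι Q (v j) = -(ι Q (v j) * ι Q (v i)) :=
  fun i j h => ι_mul_ι_comm_of_isOrtho (QuadraticMap.isOrtho_polarBilin.mp (hv i j h))

theorem isUnit_basisBlade {K : Finset (Fin n)} (hK : ∀ i ∈ K, Q (v i) ≠ 0) :
    IsUnit (basisBlade Q v K) := by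
  refine List.prod_isUnit fun y hy => ?_
  obtain ⟨i, hi, rfl⟩ := List.mem_map.mp hy
  exact isUnit_ι_of_isUnit Q (hK i ((mem_sort _).mp hi)).isUnit

theorem basisBlade_mul_basisBlade
    (hv : ∀ i j : Fin n, i ≠ j → QuadraticMap.polar Q (v i) (v j) = 0) (J K : Finset (Fin n)) :
    basisBlade Q v J * basisBlade Q v K =
      (-1) ^ (#J * #K - #(J ∩ K)) * (basisBlade Q v K * basisBlade Q v J) :=
  sort_prod_mul_sort_prod_of_anticomm (pairwise_ι_anticomm_of_polar_eq_zero Q hv) J K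

theorem inverse_basisBlade_mul_mul
    (hv : ∀ i j : Fin n, i ≠ j → QuadraticMap.polar Q (v i) (v j) = 0)
    {K : Finset (Fin n)} (hK : ∀ i ∈ K, Q (v i) ≠ 0) (J : Finset (Fin n)) :
    Ring.inverse (basisBlade Q v K) * basisBlade Q v J * basisBlade Q v K =
      (-1) ^ (#J * #K - #(J ∩ K)) * basisBlade Q v J := by
  rw [mul_assoc, basisBlade_mul_basisBlade Q hv, ((Commute.neg_one_right _).pow_right _).left_comm,
    Ring.inverse_mul_cancel_left _ _ (isUnit_basisBlade Q hK)]

end BasisBlade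

/-- Decomposition of a multivector `A = Σ_J a_J e_J` into its commutative and anticommutative
parts with respect to an invertible basis blade `e_K` selects exactly the basis blades of the
corresponding commutation parity. -/
theorem cPart_basisBlade_decomposition {n : ℕ} (v : Fin n → V)
    (hv : ∀ i j : Fin n, i ≠ j → QuadraticMap.polar Q (v i) (v j) = 0)
    (K : Finset (Fin n)) (hK : ∀ i ∈ K, Q (v i) ≠ 0)
    (a : Finset (Fin n) → ℝ)
    (A : CliffordAlgebra Q) (hA : A = ∑ J : Finset (Fin n), a J • basisBlade Q v J) :
    cPart (basisBlade Q v K) 0 A =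
      ∑ J ∈ Finset.univ.filter
          (fun J : Finset (Fin n) => (J.card * K.card - (J ∩ K).card) % 2 = 0),
        a J • basisBlade Q v J ∧
    cPart (basisBlade Q v K) 1 A =
      ∑ J ∈ Finset.univ.filter
          (fun J : Finset (Fin n) => (J.card * K.card - (J ∩ K).card) % 2 = 1),
        a J • basisBlade Q v J := by
  have parts : ∀ s : Fin 2, cPart (basisBlade Q v K) s A =
      ∑ J ∈ Finset.univ.filter
          (fun J : Finset (Fin n) => (J.card * K.card - (J ∩ K).card) % 2 = s),
        a J • basisBlade Q v J := by
    intro s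
    rw [hA, cPart_sum, Finset.sum_filter]
    refine Finset.sum_congr rfl fun J _ => ?_
    rw [cPart_smul, cPart_eq_ite_of_inverse_mul_mul_eq _ _ (inverse_basisBlade_mul_mul Q hv hK J),
      smul_ite, smul_zero]
  exact ⟨parts 0, parts 1⟩
end
end

section
/- Assume that for every u ∈ ℝ^m and every l the element i_l(u) lies in the center of 𝔸, and that each ρ_l(x,u) is linear in x. Let C, B : ℝ^m → 𝔸 be Bochner integrable. Then the geometric Fourier transform turns convolution into the product of the transforms: for every u ∈ ℝ^m, F_{F_1,F_2}(C⋆B)(u) = F_{F_1,F_2}(C)(u) · F_{F_1,F_2}(B)(u). -/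
/-! For fixed `u`, the kernel `K x = P₁ x * P₂ x` (the two ordered products of exponentials) is a
bounded continuous homomorphism from `(ℝ^m, +)` into the center of `𝔸`, because each factor
`exp (-(ρ x • i))` is: `i` is central, `ρ` is additive, and `i² = -1` gives
`exp (t • i) = cos t + sin t • i`. Centrality turns the transform into `∫ K x * A x`, and
multiplicativity gives `K x * (C y * B (x - y)) = (K y * C y) * (K (x - y) * B (x - y))`, so the
transform of `C ⋆ B` is the integral of `(K C) ⋆ (K B)`, which by Fubini is the product of the
integrals. -/

noncomputable section
open MeasureTheory

variable {𝔸 : Type*} [NormedRing 𝔸] [NormedAlgebra ℝ 𝔸] [CompleteSpace 𝔸]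

/-- The ordered product `g 0 * g 1 * ⋯ * g (d−1)`, factors in increasing order of the index. -/
def oprod {d : ℕ} (g : Fin d → 𝔸) : 𝔸 :=
  (List.ofFn g).prod

/-- The geometric Fourier transform with separable linear blade functions
`f¹_l(x,u) = ρ1_l(x,u)·i1_l(u)` (left kernel) and `f²_l(x,u) = ρ2_l(x,u)·i2_l(u)`
(right kernel):
`F(A)(u) = ∫ (∏_l exp(−f¹_l(x,u))) · A(x) · (∏_l exp(−f²_l(x,u))) dx`. -/
def gft {m μ ν' : ℕ}
    (ρ1 : Fin μ → (Fin m → ℝ) → (Fin m → ℝ) → ℝ) (i1 : Fin μ → (Fin m → ℝ) → 𝔸)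
    (ρ2 : Fin ν' → (Fin m → ℝ) → (Fin m → ℝ) → ℝ) (i2 : Fin ν' → (Fin m → ℝ) → 𝔸)
    (A : (Fin m → ℝ) → 𝔸) (u : Fin m → ℝ) : 𝔸 :=
  ∫ x : Fin m → ℝ,
    oprod (fun l => NormedSpace.exp (-(ρ1 l x u • i1 l u))) * A x *
      oprod (fun l => NormedSpace.exp (-(ρ2 l x u • i2 l u)))

open scoped Convolution

variable {R : Type*} [NormedRing R]

theorem oprod_zero (g : Fin 0 → R) : oprod g = 1 := rfl

theorem oprod_succ {d : ℕ} (g : Fin (d + 1) → R) :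
    oprod g = g 0 * oprod (fun l => g l.succ) := by
  simp [oprod, List.ofFn_succ]

structure IsBoundedCentralChar {G : Type*} [Add G] [TopologicalSpace G] (K : G → R) : Prop where
  map_add : ∀ a b, K (a + b) = K a * K b
  commute : ∀ x c, Commute c (K x)
  continuous : Continuous K
  bounded : ∃ M, ∀ x, ‖K x‖ ≤ M

namespace IsBoundedCentralChar

variable {G : Type*} [Add G] [TopologicalSpace G]

theorem one : IsBoundedCentralChar (fun _ : G => (1 : R)) where
  map_add _ _ := (mul_one 1).symm
  commute _ c := Commute.one_right c
  continuous := continuous_const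
  bounded := ⟨‖(1 : R)‖, fun _ => le_rfl⟩

theorem mul {K₁ K₂ : G → R} (h₁ : IsBoundedCentralChar K₁) (h₂ : IsBoundedCentralChar K₂) :
    IsBoundedCentralChar fun x => K₁ x * K₂ x where
  map_add a b := by
    rw [h₁.map_add, h₂.map_add, mul_assoc, ← mul_assoc (K₁ b), (h₂.commute a (K₁ b)).eq]
    simp only [mul_assoc]
  commute x c := (h₁.commute x c).mul_right (h₂.commute x c)
  continuous := h₁.continuous.mul h₂.continuous
  bounded := by
    obtain ⟨M₁, hM₁⟩ := h₁.bounded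
    obtain ⟨M₂, hM₂⟩ := h₂.bounded
    exact ⟨M₁ * M₂, fun x => (norm_mul_le _ _).trans <|
      mul_le_mul (hM₁ x) (hM₂ x) (norm_nonneg _) ((norm_nonneg _).trans (hM₁ x))⟩

end IsBoundedCentralChar

theorem isBoundedCentralChar_oprod {G : Type*} [Add G] [TopologicalSpace G] {d : ℕ}
    {K : Fin d → G → R} (hK : ∀ l, IsBoundedCentralChar (K l)) :
    IsBoundedCentralChar fun x => oprod fun l => K l x := by
  induction d with
  | zero => simpa only [oprod_zero] using IsBoundedCentralChar.one
  | succ d ih =>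
    simp only [oprod_succ]
    exact (hK 0).mul (ih fun l => hK l.succ)

theorem exp_smul_eq_cos_add_sin [NormedAlgebra ℝ R] {i : R} (hi : i ^ 2 = -1) (t : ℝ) :
    NormedSpace.exp (t • i) = Real.cos t • (1 : R) + Real.sin t • i := by
  let : NormedAlgebra ℚ R := .restrictScalars ℚ ℝ R
  let φ : ℂ →ₐ[ℝ] R := Complex.liftAux i (by rw [← sq, hi])
  have hφ : Continuous φ := φ.toLinearMap.continuous_of_finiteDimensional
  calc NormedSpace.exp (t • i) = φ (NormedSpace.exp (t • Complex.I)) := by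
        rw [NormedSpace.map_exp φ hφ, map_smul, Complex.liftAux_apply_I]
    _ = Real.cos t • (1 : R) + Real.sin t • i := by
        rw [← Complex.exp_eq_exp_ℂ, Complex.real_smul, Complex.liftAux_apply,
          Complex.exp_ofReal_mul_I_re, Complex.exp_ofReal_mul_I_im, Algebra.algebraMap_eq_smul_one]

theorem norm_exp_smul_le [NormedAlgebra ℝ R] {i : R} (hi : i ^ 2 = -1) (t : ℝ) :
    ‖NormedSpace.exp (t • i)‖ ≤ ‖(1 : R)‖ + ‖i‖ := by
  rw [exp_smul_eq_cos_add_sin hi]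
  refine (norm_add_le _ _).trans (add_le_add ?_ ?_) <;> rw [norm_smul] <;>
    exact mul_le_of_le_one_left (norm_nonneg _)
      (by simp [Real.abs_cos_le_one, Real.abs_sin_le_one])

theorem isBoundedCentralChar_exp_neg_smul [NormedAlgebra ℝ R] [CompleteSpace R] {E : Type*}
    [NormedAddCommGroup E] [NormedSpace ℝ E] [FiniteDimensional ℝ E] {ρ : E → ℝ}
    (hρ : IsLinearMap ℝ ρ) {i : R} (hi : i ^ 2 = -1) (hc : i ∈ Set.center R) :
    IsBoundedCentralChar fun x => NormedSpace.exp (-(ρ x • i)) := by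
  let : NormedAlgebra ℚ R := .restrictScalars ℚ ℝ R
  refine ⟨fun a b => ?_, fun x c => ?_, ?_, ⟨‖(1 : R)‖ + ‖i‖, fun x => ?_⟩⟩
  · rw [hρ.map_add, add_smul, neg_add, NormedSpace.exp_add_of_commute]
    exact (((Commute.refl i).smul_left _).smul_right _).neg_left.neg_right
  · exact ((((Set.mem_center_iff.mp hc).comm c).symm.smul_right _).neg_right).exp_right
  · have hρc : Continuous ρ :=
      LinearMap.continuous_of_finiteDimensional (IsLinearMap.mk' ρ hρ)
    exact NormedSpace.exp_continuous.comp ((hρc.smul continuous_const).neg)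
  · rw [← neg_smul]
    exact norm_exp_smul_le hi _

namespace IsBoundedCentralChar

theorem mul_mul_eq_mul_mul_sub {G : Type*} [AddCommGroup G] [TopologicalSpace G] {K : G → R}
    (hK : IsBoundedCentralChar K) (x y : G) (a b : R) :
    K x * (a * b) = K y * a * (K (x - y) * b) := by
  rw [← add_sub_cancel y x, hK.map_add, add_sub_cancel_left, mul_assoc, ← mul_assoc (K (x - y)),
    ← (hK.commute (x - y) a).eq]
  simp only [mul_assoc]

variable {G : Type*} [AddCommGroup G] [TopologicalSpace G] [MeasurableSpace G] [BorelSpace G]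
  [SecondCountableTopology G] {μ : Measure G} {K : G → R}

theorem integrable_mul (hK : IsBoundedCentralChar K) {A : G → R} (hA : Integrable A μ) :
    Integrable (fun x => K x * A x) μ := by
  obtain ⟨M, hM⟩ := hK.bounded
  exact hA.bdd_mul hK.continuous.aestronglyMeasurable (.of_forall hM)

theorem integral_mul_convolution [NormedAlgebra ℝ R] [CompleteSpace R]
    [IsTopologicalAddGroup G] [SFinite μ] [μ.IsAddRightInvariant] (hK : IsBoundedCentralChar K)
    {C B : G → R} (hC : Integrable C μ) (hB : Integrable B μ) :
    ∫ x, K x * ∫ y, C y * B (x - y) ∂μ ∂μ = (∫ x, K x * C x ∂μ) * ∫ x, K x * B x ∂μ := by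
  calc ∫ x, K x * ∫ y, C y * B (x - y) ∂μ ∂μ
      = ∫ x, ((fun y => K y * C y) ⋆[ContinuousLinearMap.mul ℝ R, μ] fun y => K y * B y) x ∂μ := by
        refine integral_congr_ae ?_
        filter_upwards [hC.ae_convolution_exists (ContinuousLinearMap.mul ℝ R) hB] with x hx
        have hx : Integrable (fun y => C y * B (x - y)) μ := hx
        rw [← integral_const_mul_of_integrable hx]
        simp only [convolution, ContinuousLinearMap.mul_apply', ← hK.mul_mul_eq_mul_mul_sub x]
    _ = _ := integral_convolution _ (hK.integrable_mul hC) (hK.integrable_mul hB)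

end IsBoundedCentralChar

/-- If all the directions `i_l(u)` are central, the geometric Fourier transform turns
convolution into the product of the transforms. -/
theorem gft_convolution_central {m μ ν' : ℕ}
    (ρ1 : Fin μ → (Fin m → ℝ) → (Fin m → ℝ) → ℝ) (i1 : Fin μ → (Fin m → ℝ) → 𝔸)
    (ρ2 : Fin ν' → (Fin m → ℝ) → (Fin m → ℝ) → ℝ) (i2 : Fin ν' → (Fin m → ℝ) → 𝔸)
    (hi1 : ∀ l u, i1 l u ^ 2 = -1) (hi2 : ∀ l u, i2 l u ^ 2 = -1)
    (hlin1 : ∀ l u, IsLinearMap ℝ (fun x => ρ1 l x u))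
    (hlin2 : ∀ l u, IsLinearMap ℝ (fun x => ρ2 l x u))
    (hc1 : ∀ l u, i1 l u ∈ Set.center 𝔸) (hc2 : ∀ l u, i2 l u ∈ Set.center 𝔸)
    (C B : (Fin m → ℝ) → 𝔸) (hC : Integrable C) (hB : Integrable B)
    (u : Fin m → ℝ) :
    gft ρ1 i1 ρ2 i2 (fun x => ∫ y : Fin m → ℝ, C y * B (x - y)) u =
      gft ρ1 i1 ρ2 i2 C u * gft ρ1 i1 ρ2 i2 B u := by
  have hK₁ := isBoundedCentralChar_oprod fun l =>
    isBoundedCentralChar_exp_neg_smul (hlin1 l u) (hi1 l u) (hc1 l u)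
  have hK₂ := isBoundedCentralChar_oprod fun l =>
    isBoundedCentralChar_exp_neg_smul (hlin2 l u) (hi2 l u) (hc2 l u)
  have hgft : ∀ A, gft ρ1 i1 ρ2 i2 A u =
      ∫ x, (oprod (fun l => NormedSpace.exp (-(ρ1 l x u • i1 l u))) *
        oprod (fun l => NormedSpace.exp (-(ρ2 l x u • i2 l u)))) * A x := fun A =>
    integral_congr_ae <| .of_forall fun x => by
      simp only [mul_assoc, (hK₂.commute x (A x)).eq]
  rw [hgft, hgft, hgft]
  exact (hK₁.mul hK₂).integral_mul_convolution hC hB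
end
end
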